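/- Let 1 ≤ i ≤ n. If i is even, then the sum of τ(i) over all down-up alternating permutations τ of {1,…,n} equals (n+1)·E_n − e(Z_{n,i}); if i is odd, then the sum of τ(i) over all up-down alternating permutations τ of {1,…,n} equals (n+1)·E_n − e(Z_{n,i}). Equivalently, the average of τ(i) over down-up alternating permutations (i even), respectively up-down alternating permutations (i odd), of {1,…,n} equals n + 1 − e(Z_{n,i})/E_n. -/

import Mathlib

open scoped Classical

/-- A permutation of `{1,…,m}` (0-indexed on `Fin m`) is down-up alternating if
`τ(1) > τ(2) < τ(3) > ⋯`. -/
def DownUp {m : ℕ} (τ : Equiv.Perm (Fin m)) : Prop :=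
  ∀ i : ℕ, ∀ h : i + 1 < m,
    if Even i then τ ⟨i + 1, h⟩ < τ ⟨i, Nat.lt_of_succ_lt h⟩
    else τ ⟨i, Nat.lt_of_succ_lt h⟩ < τ ⟨i + 1, h⟩

/-- Up-down alternating: `τ(1) < τ(2) > τ(3) < ⋯`. -/
def UpDown {m : ℕ} (τ : Equiv.Perm (Fin m)) : Prop :=
  ∀ i : ℕ, ∀ h : i + 1 < m,
    if Even i then τ ⟨i, Nat.lt_of_succ_lt h⟩ < τ ⟨i + 1, h⟩
    else τ ⟨i + 1, h⟩ < τ ⟨i, Nat.lt_of_succ_lt h⟩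

/-- The Euler number `E_m`: the number of down-up alternating permutations of `{1,…,m}`. -/
noncomputable def eulerNumber (m : ℕ) : ℕ :=
  Nat.card {τ : Equiv.Perm (Fin m) // DownUp τ}

/-- The generating (cover) relations of the augmented zigzag poset `Z_{n,i}` on `{0,…,n}`:
`0 ⪯ i`; for `1 ≤ j < i`, `j ⪯ j+1` iff `i - j` is odd; for `i ≤ j < n`, `j ⪯ j+1` iff
`j - i` is odd. -/
def ZRel (n i : ℕ) (x y : ℕ) : Prop :=
  (x = 0 ∧ y = i) ∨
  (y = x + 1 ∧ 1 ≤ x ∧ x < i ∧ Odd (i - x)) ∨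
  (y = x + 1 ∧ i ≤ x ∧ x < n ∧ Odd (x - i)) ∨
  (x = y + 1 ∧ 1 ≤ y ∧ y < i ∧ Even (i - y)) ∨
  (x = y + 1 ∧ i ≤ y ∧ y < n ∧ Even (y - i))

/-- A linear extension of `Z_{n,i}`: a bijection `σ : {0,…,n} → {0,…,n}` with `σ(a) < σ(b)`
whenever `a ≺ b` in `Z_{n,i}` (equivalently, on the generating relations). -/
def IsLinExtZ (n i : ℕ) (σ : Equiv.Perm (Fin (n + 1))) : Prop :=
  ∀ a b : Fin (n + 1), ZRel n i (a : ℕ) (b : ℕ) → σ a < σ b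

/-- `e(Z_{n,i})`, the number of linear extensions of the augmented zigzag poset. -/
noncomputable def eZ (n i : ℕ) : ℕ :=
  Nat.card {σ : Equiv.Perm (Fin (n + 1)) // IsLinExtZ n i σ}

/-!
A linear extension `σ` of `Z_{n,i}` is determined by `t = σ 0` together with the relative order
of `σ 1, …, σ n`. Read upside down, that relative order is a permutation `τ` of `Fin n` which
must alternate with the parity of `i` (down-up for even `i`, up-down for odd `i`), and the only
remaining relation `σ 0 < σ i` says `t + τ (i - 1) + 1 ≤ n`, leaving `n - τ (i - 1)` choices
for `t`. Hence `e(Z_{n,i}) = ∑_τ (n - τ (i - 1))`; adding `∑_τ (τ (i - 1) + 1)` gives `n + 1`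
times the number of such `τ`, which is `E_n` for either parity because complementing values
swaps the two alternation patterns.
-/

open Equiv Finset

section

variable {n : ℕ}

def Alternating (p : ℕ) (τ : Perm (Fin n)) : Prop :=
  ∀ j : ℕ, ∀ h : j + 1 < n,
    if Even (p + j) then τ ⟨j + 1, h⟩ < τ ⟨j, Nat.lt_of_succ_lt h⟩
    else τ ⟨j, Nat.lt_of_succ_lt h⟩ < τ ⟨j + 1, h⟩

theorem alternating_iff_downUp {p : ℕ} (hp : Even p) (τ : Perm (Fin n)) :
    Alternating p τ ↔ DownUp τ := by
  simp only [Alternating, DownUp, Nat.even_add, hp, true_iff]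

theorem alternating_iff_upDown {p : ℕ} (hp : Odd p) (τ : Perm (Fin n)) :
    Alternating p τ ↔ UpDown τ := by
  simp only [Alternating, UpDown, Nat.even_add, Nat.not_even_iff_odd.mpr hp, false_iff,
    ite_not]

theorem alternating_revPerm_mul_iff (p : ℕ) (τ : Perm (Fin n)) :
    Alternating p (Fin.revPerm * τ) ↔ Alternating (p + 1) τ := by
  simp only [Alternating, Perm.mul_apply, Fin.revPerm_apply, Fin.rev_lt_rev, add_right_comm p 1,
    Nat.even_add_one, ite_not]

theorem card_alternating (p : ℕ) : #{τ : Perm (Fin n) | Alternating p τ} = eulerNumber n := by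
  induction p with
  | zero =>
    simp only [eulerNumber, Nat.card_eq_fintype_card, Fintype.card_subtype,
      alternating_iff_downUp Even.zero]
  | succ p ih =>
    rw [← ih]
    exact card_equiv (Equiv.mulLeft Fin.revPerm) fun τ => by
      simp [alternating_revPerm_mul_iff]

def consRev (t : Fin (n + 1)) (τ : Perm (Fin n)) : Perm (Fin (n + 1)) :=
  (finSuccEquiv' 0).trans ((optionCongr (τ.trans Fin.revPerm)).trans (finSuccEquiv' t).symm)

@[simp]
theorem consRev_zero (t : Fin (n + 1)) (τ : Perm (Fin n)) : consRev t τ 0 = t := by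
  simp [consRev, finSuccEquiv'_at, finSuccEquiv'_symm_none]

@[simp]
theorem consRev_succ (t : Fin (n + 1)) (τ : Perm (Fin n)) (j : Fin n) :
    consRev t τ j.succ = t.succAbove (τ j).rev := by
  simp [consRev, finSuccEquiv'_zero, finSuccEquiv'_symm_some]

theorem consRev_succ_lt_succ_iff (t : Fin (n + 1)) (τ : Perm (Fin n)) (a b : Fin n) :
    consRev t τ a.succ < consRev t τ b.succ ↔ τ b < τ a := by
  rw [consRev_succ, consRev_succ, Fin.succAbove_lt_succAbove_iff, Fin.rev_lt_rev]

theorem consRev_zero_lt_succ_iff (t : Fin (n + 1)) (τ : Perm (Fin n)) (b : Fin n) :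
    consRev t τ 0 < consRev t τ b.succ ↔ (t : ℕ) + τ b + 1 ≤ n := by
  rw [consRev_zero, consRev_succ, Fin.lt_succAbove_iff_le_castSucc, Fin.le_def,
    Fin.val_castSucc, Fin.val_rev]
  omega

theorem consRev_bijective :
    Function.Bijective fun p : Fin (n + 1) × Perm (Fin n) => consRev p.1 p.2 := by
  refine (Fintype.bijective_iff_injective_and_card _).mpr ⟨?_, ?_⟩
  · rintro ⟨t, τ⟩ ⟨t', τ'⟩ h
    obtain rfl : t = t' := by simpa using DFunLike.congr_fun h 0
    refine Prod.ext rfl (Equiv.ext fun j => ?_)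
    have := DFunLike.congr_fun h j.succ
    simp only [consRev_succ] at this
    exact Fin.rev_injective (Fin.succAbove_right_injective this)
  · simp [Fintype.card_perm, Nat.factorial_succ]

theorem zRel_iff {i x y : ℕ} (hi : 1 ≤ i) (hin : i ≤ n) :
    ZRel n i x y ↔ (x = 0 ∧ y = i) ∨ ∃ j, j + 1 < n ∧
      (Even (i + j) ∧ x = j + 1 ∧ y = j + 2 ∨ ¬Even (i + j) ∧ x = j + 2 ∧ y = j + 1) := by
  simp only [ZRel, ← Nat.not_even_iff_odd, Nat.even_iff]
  constructor
  · rintro (h | h | h | h | h)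
    · exact .inl h
    all_goals exact .inr ⟨min x y - 1, by omega⟩
  · rintro (h | ⟨j, h⟩) <;> omega

theorem isLinExtZ_iff {i : ℕ} (hi : 1 ≤ i) (hin : i ≤ n) (σ : Perm (Fin (n + 1))) :
    IsLinExtZ n i σ ↔ σ 0 < σ ⟨i, by omega⟩ ∧ ∀ j : ℕ, ∀ h : j + 1 < n,
      if Even (i + j) then σ ⟨j + 1, by omega⟩ < σ ⟨j + 2, by omega⟩
      else σ ⟨j + 2, by omega⟩ < σ ⟨j + 1, by omega⟩ := by
  constructor
  · intro H
    refine ⟨H _ _ ((zRel_iff hi hin).2 (.inl ⟨rfl, rfl⟩)), fun j h => ?_⟩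
    split_ifs with hp
    all_goals exact H _ _ ((zRel_iff hi hin).2 (.inr ⟨j, h, by simp [hp]⟩))
  · rintro ⟨h0, halt⟩ ⟨a, ha⟩ ⟨b, hb⟩ hab
    obtain ⟨rfl, rfl⟩ | ⟨j, hj, ⟨hp, rfl, rfl⟩ | ⟨hp, rfl, rfl⟩⟩ := (zRel_iff hi hin).1 hab
    · exact h0
    all_goals simpa [hp] using halt j hj

theorem isLinExtZ_consRev_iff {i : ℕ} (hi : 1 ≤ i) (hin : i ≤ n) (t : Fin (n + 1))
    (τ : Perm (Fin n)) :
    IsLinExtZ n i (consRev t τ) ↔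
      (t : ℕ) + τ ⟨i - 1, Nat.sub_one_lt_of_le hi hin⟩ + 1 ≤ n ∧ Alternating i τ := by
  have hi' : (⟨i, by omega⟩ : Fin (n + 1)) = Fin.succ ⟨i - 1, by omega⟩ :=
    Fin.ext (Nat.succ_pred_eq_of_pos hi).symm
  rw [isLinExtZ_iff hi hin, hi', consRev_zero_lt_succ_iff]
  refine and_congr_right' (forall_congr' fun j => forall_congr' fun h => ?_)
  split_ifs
  · exact consRev_succ_lt_succ_iff t τ ⟨j, by omega⟩ ⟨j + 1, h⟩
  · exact consRev_succ_lt_succ_iff t τ ⟨j + 1, h⟩ ⟨j, by omega⟩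

theorem card_filter_val_add_one_le (v : ℕ) :
    #{t : Fin (n + 1) | (t : ℕ) + v + 1 ≤ n} = n - v := by
  have : ({t | (t : ℕ) + v + 1 ≤ n} : Finset (Fin (n + 1))) = Iio ⟨n - v, by omega⟩ := by
    ext t
    simp only [Order.add_one_le_iff, mem_filter, mem_univ, true_and, mem_Iio, Fin.lt_def]
    omega
  rw [this, Fin.card_Iio]

theorem eZ_eq_sum {i : ℕ} (hi : 1 ≤ i) (hin : i ≤ n) :
    eZ n i =
      ∑ τ : Perm (Fin n) with Alternating i τ, (n - τ ⟨i - 1, Nat.sub_one_lt_of_le hi hin⟩) := by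
  have hcard : Nat.card {p : Fin (n + 1) × Perm (Fin n) // IsLinExtZ n i (consRev p.1 p.2)} =
      eZ n i :=
    Nat.card_congr ((Equiv.ofBijective _ consRev_bijective).subtypeEquiv fun _ => Iff.rfl)
  rw [← hcard, Nat.card_eq_fintype_card, Fintype.card_subtype]
  simp only [isLinExtZ_consRev_iff hi hin, Finset.card_filter, Fintype.sum_prod_type_right]
  rw [sum_filter]
  refine sum_congr rfl fun τ _ => ?_
  split_ifs with hτ
  · simp only [hτ, and_true, ← card_filter, card_filter_val_add_one_le]
  · simp [hτ]

theorem sum_alternating_add_eZ {i : ℕ} (hi : 1 ≤ i) (hin : i ≤ n) :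
    ∑ τ : Perm (Fin n) with Alternating i τ, ((τ ⟨i - 1, Nat.sub_one_lt_of_le hi hin⟩ : ℕ) + 1)
      + eZ n i = (n + 1) * eulerNumber n := by
  rw [eZ_eq_sum hi hin, ← sum_add_distrib, ← card_alternating i, mul_comm, ← smul_eq_mul,
    ← sum_const]
  exact sum_congr rfl fun τ _ => by omega

end

/-- for `1 ≤ i ≤ n`, the sum of `τ(i)` over all down-up (if `i` even), resp.
up-down (if `i` odd), alternating permutations of `{1,…,n}` equals `(n+1)·E_n - e(Z_{n,i})`
(so the corresponding average is `n + 1 - e(Z_{n,i})/E_n`). -/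
theorem sum_ith_entry_complement (n i : ℕ) (hi1 : 1 ≤ i) (hin : i ≤ n) :
    (Even i →
      ((∑ τ ∈ Finset.univ.filter (fun τ : Equiv.Perm (Fin n) => DownUp τ),
          ((τ ⟨i - 1, by omega⟩ : ℕ) + 1) : ℕ) : ℤ) =
        (n + 1) * eulerNumber n - eZ n i) ∧
    (Odd i →
      ((∑ τ ∈ Finset.univ.filter (fun τ : Equiv.Perm (Fin n) => UpDown τ),
          ((τ ⟨i - 1, by omega⟩ : ℕ) + 1) : ℕ) : ℤ) =
        (n + 1) * eulerNumber n - eZ n i) := by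
  have key := sum_alternating_add_eZ hi1 hin
  refine ⟨fun hi => ?_, fun hi => ?_⟩ <;> rw [eq_sub_iff_add_eq]
  · simp only [alternating_iff_downUp hi] at key
    exact_mod_cast key
  · simp only [alternating_iff_upDown hi] at key
    exact_mod_cast key
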